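/- arXiv:1608.07736 — 2 statements merged into one kernel-verified Lean document; each statement's English description precedes it below -/
import Mathlib

section
/- Let a = (a_{ij}^{αβ}) be a tensor satisfying the symmetries a_{ij}^{αβ} = a_{ji}^{βα} and a_{ij}^{αβ} = a_{αj}^{iβ}, and the coercivity a_{ij}^{αβ} ξ_i^α ξ_j^β ≥ κ₁|ξ|² for all symmetric matrices ξ, with κ₁ > 0. Define ã_{ij}^{αβ} = a_{ij}^{αβ} + μ δ_{iα} δ_{jβ} − μ δ_{iβ} δ_{jα} with μ = κ₁/4. Then ã satisfies the Legendre (very strong ellipticity) condition: ã_{ij}^{αβ} ξ_i^α ξ_j^β ≥ μ |ξ|² for every d×d matrix ξ. -/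
open Matrix

/-!
Write `Q(ξ) = a_{ij}^{αβ} ξ_i^α ξ_j^β`. The two minor symmetries make the bilinear form of `a`
blind to transposing either argument, so `Q(ξ + ξᵀ) = 4 Q(ξ)` and coercivity on the symmetric
matrix `ξ + ξᵀ` gives `4 Q(ξ) ≥ κ₁ |ξ + ξᵀ|² = 2κ₁ (|ξ|² + ξ_i^α ξ_α^i)`. The Kronecker terms add
`μ (tr ξ)² ≥ 0` and `-μ ξ_i^α ξ_α^i`, so with `μ = κ₁/4` the perturbed form is at least
`μ |ξ|² + (κ₁/8) |ξ + ξᵀ|² ≥ μ |ξ|²`.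
-/

section TensorForm

variable {R : Type*} [CommRing R] {n : Type*} [Fintype n]

def tensorForm (a : n → n → n → n → R) : LinearMap.BilinForm R (Matrix n n R) :=
  LinearMap.mk₂ R (fun ξ η => ∑ i, ∑ α, ∑ j, ∑ β, a i j α β * ξ i α * η j β)
    (by intros; simp only [Matrix.add_apply, add_mul, mul_add, Finset.sum_add_distrib])
    (by intros; simp only [Matrix.smul_apply, smul_eq_mul, Finset.mul_sum, mul_assoc, mul_left_comm])
    (by intros; simp only [Matrix.add_apply, mul_add, Finset.sum_add_distrib])
    (by intros; simp only [Matrix.smul_apply, smul_eq_mul, Finset.mul_sum, mul_assoc, mul_left_comm])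

theorem tensorForm_apply (a : n → n → n → n → R) (ξ η : Matrix n n R) :
    tensorForm a ξ η = ∑ i, ∑ α, ∑ j, ∑ β, a i j α β * ξ i α * η j β :=
  rfl

theorem tensorForm_eq_sum (a : n → n → n → n → R) (ξ η : Matrix n n R) :
    tensorForm a ξ η = ∑ i, ∑ j, ∑ α, ∑ β, a i j α β * ξ i α * η j β :=
  Finset.sum_congr rfl fun _ _ => Finset.sum_comm

variable {a : n → n → n → n → R}

theorem tensorForm_transpose_left (ha : ∀ i j α β, a i j α β = a α j i β) (ξ η : Matrix n n R) :
    tensorForm a ξᵀ η = tensorForm a ξ η := by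
  rw [tensorForm_apply, Finset.sum_comm]
  refine Finset.sum_congr rfl fun i _ => Finset.sum_congr rfl fun α _ =>
    Finset.sum_congr rfl fun j _ => Finset.sum_congr rfl fun β _ => ?_
  rw [transpose_apply, ← ha]

theorem tensorForm_transpose_right (ha : ∀ i j α β, a i j α β = a i β α j) (ξ η : Matrix n n R) :
    tensorForm a ξ ηᵀ = tensorForm a ξ η := by
  refine Finset.sum_congr rfl fun i _ => Finset.sum_congr rfl fun α _ => ?_
  rw [Finset.sum_comm]
  refine Finset.sum_congr rfl fun j _ => Finset.sum_congr rfl fun β _ => ?_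
  rw [transpose_apply, ← ha]

theorem tensorForm_add_transpose_self (ha₁ : ∀ i j α β, a i j α β = a α j i β)
    (ha₂ : ∀ i j α β, a i j α β = a i β α j) (ξ : Matrix n n R) :
    tensorForm a (ξ + ξᵀ) (ξ + ξᵀ) = 4 * tensorForm a ξ ξ := by
  simp only [map_add, LinearMap.add_apply, tensorForm_transpose_left ha₁,
    tensorForm_transpose_right ha₂]
  ring

theorem sum_sq_add_transpose (ξ : Matrix n n R) :
    ∑ i, ∑ α, (ξ + ξᵀ) i α ^ 2 = 2 * ∑ i, ∑ α, ξ i α ^ 2 + 2 * ∑ i, ∑ α, ξ i α * ξ α i := by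
  have hswap : ∑ i, ∑ α, ξ α i ^ 2 = ∑ i, ∑ α, ξ i α ^ 2 := Finset.sum_comm
  have hexpand (i α : n) : (ξ + ξᵀ) i α ^ 2 = ξ i α ^ 2 + ξ α i ^ 2 + 2 * (ξ i α * ξ α i) := by
    rw [Matrix.add_apply, transpose_apply]; ring
  simp only [hexpand, Finset.sum_add_distrib, hswap, ← Finset.mul_sum]
  ring

variable [DecidableEq n]

theorem sum_kronecker_perturbation (a : n → n → n → n → R) (μ : R) (ξ : Matrix n n R) :
    ∑ i, ∑ j, ∑ α, ∑ β,
      (a i j α β + μ * (if i = α then (1:R) else 0) * (if j = β then (1:R) else 0)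
        - μ * (if i = β then (1:R) else 0) * (if j = α then (1:R) else 0)) * ξ i α * ξ j β
      = tensorForm a ξ ξ + μ * ξ.trace ^ 2 - μ * ∑ i, ∑ α, ξ i α * ξ α i := by
  have htrace : ∑ i, ∑ j, ∑ α, ∑ β,
      (if i = α then (1:R) else 0) * (if j = β then (1:R) else 0) * ξ i α * ξ j β = ξ.trace ^ 2 := by
    simp [ite_mul, Matrix.trace, sq, Finset.sum_mul_sum]
  have hswap : ∑ i, ∑ j, ∑ α, ∑ β,
      (if i = β then (1:R) else 0) * (if j = α then (1:R) else 0) * ξ i α * ξ j β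
      = ∑ i, ∑ α, ξ i α * ξ α i := by
    simp [ite_mul]
  have hsplit (i j α β : n) :
      (a i j α β + μ * (if i = α then (1:R) else 0) * (if j = β then (1:R) else 0)
        - μ * (if i = β then (1:R) else 0) * (if j = α then (1:R) else 0)) * ξ i α * ξ j β
      = a i j α β * ξ i α * ξ j β
        + μ * ((if i = α then (1:R) else 0) * (if j = β then (1:R) else 0) * ξ i α * ξ j β)
        - μ * ((if i = β then (1:R) else 0) * (if j = α then (1:R) else 0) * ξ i α * ξ j β) := by
    ring
  simp only [hsplit, Finset.sum_add_distrib, Finset.sum_sub_distrib, ← Finset.mul_sum, htrace, hswap,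
    tensorForm_eq_sum]

end TensorForm

/-- With `ã_{ij}^{αβ} = a_{ij}^{αβ} + μ δ_{iα}δ_{jβ} − μ δ_{iβ}δ_{jα}`, `μ = κ₁/4`,
the tensor `ã` satisfies the Legendre (very strong ellipticity) condition. -/
theorem stmt2 (d : ℕ) (κ₁ : ℝ) (hκ : 0 < κ₁)
    (a : Fin d → Fin d → Fin d → Fin d → ℝ)
    (hsym1 : ∀ i j α β, a i j α β = a j i β α)
    (hsym2 : ∀ i j α β, a i j α β = a α j i β)
    (hcoer : ∀ ξ : Matrix (Fin d) (Fin d) ℝ, ξ.IsSymm →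
      κ₁ * ∑ i, ∑ α, (ξ i α) ^ 2 ≤ ∑ i, ∑ j, ∑ α, ∑ β, a i j α β * ξ i α * ξ j β) :
    ∀ ξ : Matrix (Fin d) (Fin d) ℝ,
      (κ₁ / 4) * ∑ i, ∑ α, (ξ i α) ^ 2 ≤
        ∑ i, ∑ j, ∑ α, ∑ β,
          (a i j α β
            + (κ₁ / 4) * (if i = α then (1:ℝ) else 0) * (if j = β then (1:ℝ) else 0)
            - (κ₁ / 4) * (if i = β then (1:ℝ) else 0) * (if j = α then (1:ℝ) else 0))
          * ξ i α * ξ j β := by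
  intro ξ
  have hsym3 (i j α β : Fin d) : a i j α β = a i β α j := by
    rw [hsym1 i j α β, hsym2 j i β α, hsym1 β i j α]
  have hcoer_sym := hcoer (ξ + ξᵀ) (isSymm_add_transpose_self ξ)
  have hnonneg : 0 ≤ ∑ i, ∑ α, (ξ + ξᵀ) i α ^ 2 := by positivity
  rw [← tensorForm_eq_sum, tensorForm_add_transpose_self hsym2 hsym3] at hcoer_sym
  rw [sum_sq_add_transpose] at hcoer_sym hnonneg
  rw [sum_kronecker_perturbation]
  linarith [mul_nonneg hκ.le hnonneg, mul_nonneg hκ.le (sq_nonneg ξ.trace)]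
end

section
/- Let Ω ⊆ ℝ^d be a bounded open set, A ∈ C¹ a tensor satisfying a_{ij}^{αβ} = a_{ji}^{βα}, and u ∈ C²(Ω̄; ℝ^d) a solution of ∂_i(a_{ij}^{αβ} ∂_j u^β) = 0 in Ω, with Ω having C¹ boundary. Then for any vector field h ∈ C¹(ℝ^d; ℝ^d), the Rellich-type identity holds: ∫_{∂Ω} ⟨h, n⟩ a_{ij}^{αβ} ∂_i u^α ∂_j u^β dσ = 2 ∫_{∂Ω} ⟨h, ∇u^α⟩ (n_i a_{ij}^{αβ} ∂_j u^β) dσ + I, where |I| ≤ C ∫_Ω (|∇h| + |h||∇A|) |∇u|² dx and C depends only on the dimension and the L^∞ bound of A. -/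
open MeasureTheory

/-- Partial derivative `∂_i f`. -/
noncomputable def pd19 (d : ℕ) (i : Fin d) (f : EuclideanSpace ℝ (Fin d) → ℝ)
    (x : EuclideanSpace ℝ (Fin d)) : ℝ :=
  fderiv ℝ f x (EuclideanSpace.single i 1)

namespace Stmt19Aux

variable {d : ℕ}

local notation "E" => EuclideanSpace ℝ (Fin d)

lemma pd19_sum {ι : Type*} (s : Finset ι) (f : ι → E → ℝ) (i : Fin d)
    (x : E) (hf : ∀ j ∈ s, DifferentiableAt ℝ (f j) x) :
    pd19 d i (fun y => ∑ j ∈ s, f j y) x = ∑ j ∈ s, pd19 d i (f j) x := by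
  unfold pd19
  rw [fderiv_fun_sum hf]
  simp

lemma pd19_mul {f g : E → ℝ} (i : Fin d) (x : E)
    (hf : DifferentiableAt ℝ f x) (hg : DifferentiableAt ℝ g x) :
    pd19 d i (fun y => f y * g y) x = pd19 d i f x * g x + f x * pd19 d i g x := by
  unfold pd19
  rw [fderiv_fun_mul hf hg]
  simp [mul_comm]
  ring

lemma pd19_contDiff {m n : ℕ} {f : E → ℝ} (hf : ContDiff ℝ n f)
    (hmn : m + 1 ≤ n) (i : Fin d) : ContDiff ℝ m (pd19 d i f) := by
  have h1 : ContDiff ℝ m (fderiv ℝ f) := hf.fderiv_right (by exact_mod_cast hmn)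
  exact (ContinuousLinearMap.apply ℝ ℝ (EuclideanSpace.single i 1)).contDiff.comp h1

lemma pd19_comm {f : E → ℝ} (hf : ContDiff ℝ 2 f) (i j : Fin d) (x : E) :
    pd19 d i (pd19 d j f) x = pd19 d j (pd19 d i f) x := by
  have hs : IsSymmSndFDerivAt ℝ f x := (hf.contDiffAt).isSymmSndFDerivAt (by norm_num)
  have hd : DifferentiableAt ℝ (fderiv ℝ f) x :=
    (hf.fderiv_right (m := 1) (by norm_num)).differentiable one_ne_zero x
  have key : ∀ (k : Fin d) (v : E),
      fderiv ℝ (fun y => fderiv ℝ f y v) x (EuclideanSpace.single k 1)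
        = fderiv ℝ (fderiv ℝ f) x (EuclideanSpace.single k 1) v := by
    intro k v
    rw [fderiv_clm_apply hd (differentiableAt_const v)]
    simp
  unfold pd19
  rw [key i _, key j _]
  exact hs.eq _ _

lemma euclid_abs_le (v : E) (k : Fin d) : |v k| ≤ ‖v‖ := by
  rw [EuclideanSpace.norm_eq]
  have h1 : |v k| = Real.sqrt ((v k)^2) := by rw [Real.sqrt_sq_eq_abs]
  rw [h1]
  apply Real.sqrt_le_sqrt
  calc (v k)^2 ≤ ∑ i, (v i)^2 :=
        Finset.single_le_sum (f := fun i => (v i)^2) (fun i _ => sq_nonneg _) (Finset.mem_univ k)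
  _ = ∑ i, ‖v i‖^2 := by simp [Real.norm_eq_abs, sq_abs]

lemma integrableOn_of_continuous {Ω : Set E} (hb : Bornology.IsBounded Ω)
    {f : E → ℝ} (hf : Continuous f) : IntegrableOn f Ω := by
  have hc : IsCompact (closure Ω) := Metric.isCompact_of_isClosed_isBounded isClosed_closure hb.closure
  exact (hf.continuousOn.integrableOn_compact hc).mono_set subset_closure

lemma abs_fintype_sum_le {ι : Type*} [Fintype ι] {f : ι → ℝ} {c : ℝ}
    (hf : ∀ q, |f q| ≤ c) : |∑ q, f q| ≤ (Fintype.card ι : ℝ) * c := by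
  calc |∑ q, f q| ≤ ∑ q, |f q| := Finset.abs_sum_le_sum_abs _ _
  _ ≤ ∑ _q : ι, c := Finset.sum_le_sum (fun q _ => hf q)
  _ = (Fintype.card ι : ℝ) * c := by simp [Finset.sum_const, Finset.card_univ, nsmul_eq_mul]

lemma abs_mul3_le {w a pq W A P : ℝ} (hw : |w| ≤ W) (ha : |a| ≤ A) (hpq : |pq| ≤ P) :
    |w * (a * pq)| ≤ W * (A * P) := by
  rw [abs_mul, abs_mul]
  exact mul_le_mul hw (mul_le_mul ha hpq (abs_nonneg _) ((abs_nonneg a).trans ha))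
    (by positivity) ((abs_nonneg w).trans hw)

section Main

variable (a : EuclideanSpace ℝ (Fin d) → Fin d → Fin d → Fin d → Fin d → ℝ)
  (u : EuclideanSpace ℝ (Fin d) → Fin d → ℝ)
  (h : EuclideanSpace ℝ (Fin d) → EuclideanSpace ℝ (Fin d))

/-- `∂_i u^α`. -/
noncomputable def pfn (i α : Fin d) : EuclideanSpace ℝ (Fin d) → ℝ := pd19 d i (fun y => u y α)

/-- `a_{ij}^{αβ} ∂_i u^α ∂_j u^β` summed. -/
noncomputable def Sfn : EuclideanSpace ℝ (Fin d) → ℝ :=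
  fun x => ∑ i, ∑ j, ∑ α, ∑ β, a x i j α β * pfn u i α x * pfn u j β x

/-- `w_i^α = a_{ij}^{αβ} ∂_j u^β` summed over `j β`. -/
noncomputable def wfn (i α : Fin d) : EuclideanSpace ℝ (Fin d) → ℝ :=
  fun y => ∑ j, ∑ β, a y i j α β * pd19 d j (fun z => u z β) y

/-- `q^α = h_k ∂_k u^α` summed over `k`. -/
noncomputable def qfn (α : Fin d) : EuclideanSpace ℝ (Fin d) → ℝ :=
  fun x => ∑ k, h x k * pfn u k α x

variable {a u h}

lemma contDiff_a_comp (ha : ContDiff ℝ 1 a) (i j α β : Fin d) :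
    ContDiff ℝ 1 (fun x => a x i j α β) :=
  contDiff_pi.mp (contDiff_pi.mp (contDiff_pi.mp (contDiff_pi.mp ha i) j) α) β

lemma contDiff_h_comp (hh : ContDiff ℝ 1 h) (k : Fin d) :
    ContDiff ℝ 1 (fun x => h x k) := by
  have : (fun x => h x k) = (EuclideanSpace.proj (𝕜 := ℝ) k) ∘ h := rfl
  rw [this]
  exact (EuclideanSpace.proj k).contDiff.comp hh

lemma contDiff_p (hu : ContDiff ℝ 2 u) (i α : Fin d) : ContDiff ℝ 1 (pfn u i α) :=
  pd19_contDiff (contDiff_pi.mp hu α) (by norm_num) i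

lemma contDiff_S (ha : ContDiff ℝ 1 a) (hu : ContDiff ℝ 2 u) : ContDiff ℝ 1 (Sfn a u) := by
  refine ContDiff.sum fun i _ => ContDiff.sum fun j _ => ContDiff.sum fun α _ =>
    ContDiff.sum fun β _ => ?_
  exact ((contDiff_a_comp ha i j α β).mul (contDiff_p hu i α)).mul (contDiff_p hu j β)

lemma contDiff_w (ha : ContDiff ℝ 1 a) (hu : ContDiff ℝ 2 u) (i α : Fin d) :
    ContDiff ℝ 1 (wfn a u i α) := by
  refine ContDiff.sum fun j _ => ContDiff.sum fun β _ => ?_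
  exact (contDiff_a_comp ha i j α β).mul (contDiff_p hu j β)

lemma contDiff_q (hu : ContDiff ℝ 2 u) (hh : ContDiff ℝ 1 h) (α : Fin d) :
    ContDiff ℝ 1 (qfn u h α) := by
  refine ContDiff.sum fun k _ => ?_
  exact (contDiff_h_comp hh k).mul (contDiff_p hu k α)


lemma sum4_collapse (f : Fin d → Fin d → Fin d → Fin d → ℝ) :
    (∑ i, ∑ j, ∑ α, ∑ β, f i j α β)
      = ∑ q : Fin d × Fin d × Fin d × Fin d, f q.1 q.2.1 q.2.2.1 q.2.2.2 := by
  simp only [Fintype.sum_prod_type]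

lemma sum5_collapse (f : Fin d → Fin d → Fin d → Fin d → Fin d → ℝ) :
    (∑ i, ∑ j, ∑ k, ∑ l, ∑ m, f i j k l m)
      = ∑ q : Fin d × Fin d × Fin d × Fin d × Fin d, f q.1 q.2.1 q.2.2.1 q.2.2.2.1 q.2.2.2.2 := by
  simp only [Fintype.sum_prod_type]

/-- the index swap `(i,j,α,β) ↦ (j,i,β,α)`. -/
def sw4 : (Fin d × Fin d × Fin d × Fin d) ≃ (Fin d × Fin d × Fin d × Fin d) :=
  ⟨fun q => (q.2.1, q.1, q.2.2.2, q.2.2.1), fun q => (q.2.1, q.1, q.2.2.2, q.2.2.1),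
    fun q => rfl, fun q => rfl⟩

lemma swap_sum (hsymm : ∀ x i j α β, a x i j α β = a x j i β α) (hu : ContDiff ℝ 2 u)
    (k : Fin d) (x : EuclideanSpace ℝ (Fin d)) :
    (∑ i, ∑ j, ∑ α, ∑ β, a x i j α β * (pfn u i α x * pd19 d k (pfn u j β) x))
      = ∑ i, ∑ j, ∑ α, ∑ β, a x i j α β * pd19 d k (pfn u i α) x * pfn u j β x := by
  rw [sum4_collapse (fun i j α β => a x i j α β * (pfn u i α x * pd19 d k (pfn u j β) x)),
    sum4_collapse (fun i j α β => a x i j α β * pd19 d k (pfn u i α) x * pfn u j β x)]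
  rw [← Equiv.sum_comp sw4
    (fun q => a x q.1 q.2.1 q.2.2.1 q.2.2.2 * pd19 d k (pfn u q.1 q.2.2.1) x * pfn u q.2.1 q.2.2.2 x)]
  refine Finset.sum_congr rfl fun q _ => ?_
  show a x q.1 q.2.1 q.2.2.1 q.2.2.2 * (pfn u q.1 q.2.2.1 x * pd19 d k (pfn u q.2.1 q.2.2.2) x)
    = a x q.2.1 q.1 q.2.2.2 q.2.2.1 * pd19 d k (pfn u q.2.1 q.2.2.2) x * pfn u q.1 q.2.2.1 x
  rw [hsymm x q.1 q.2.1 q.2.2.1 q.2.2.2]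
  ring

lemma pd_S (ha : ContDiff ℝ 1 a) (hu : ContDiff ℝ 2 u)
    (hsymm : ∀ x i j α β, a x i j α β = a x j i β α)
    (k : Fin d) (x : EuclideanSpace ℝ (Fin d)) :
    pd19 d k (Sfn a u) x
      = (∑ i, ∑ j, ∑ α, ∑ β,
          pd19 d k (fun y => a y i j α β) x * pfn u i α x * pfn u j β x)
        + 2 * ∑ i, ∑ j, ∑ α, ∑ β,
            a x i j α β * pd19 d k (pfn u i α) x * pfn u j β x := by
  have dA : ∀ i j α β, Differentiable ℝ (fun y => a y i j α β) :=
    fun i j α β => (contDiff_a_comp ha i j α β).differentiable one_ne_zero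
  have dP : ∀ i α, Differentiable ℝ (pfn u i α) :=
    fun i α => (contDiff_p hu i α).differentiable one_ne_zero
  have dT : ∀ i j α β, Differentiable ℝ (fun y => a y i j α β * pfn u i α y * pfn u j β y) :=
    fun i j α β => ((dA i j α β).mul (dP i α)).mul (dP j β)
  have dT3 : ∀ i j α, Differentiable ℝ (fun y => ∑ β, a y i j α β * pfn u i α y * pfn u j β y) :=
    fun i j α => Differentiable.fun_sum fun β _ => dT i j α β
  have dT2 : ∀ i j, Differentiable ℝ (fun y => ∑ α, ∑ β, a y i j α β * pfn u i α y * pfn u j β y) :=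
    fun i j => Differentiable.fun_sum fun α _ => dT3 i j α
  have dT1 : ∀ i, Differentiable ℝ (fun y => ∑ j, ∑ α, ∑ β, a y i j α β * pfn u i α y * pfn u j β y) :=
    fun i => Differentiable.fun_sum fun j _ => dT2 i j
  have main : ∀ i, pd19 d k (fun y => ∑ j, ∑ α, ∑ β, a y i j α β * pfn u i α y * pfn u j β y) x
      = ∑ j, ∑ α, ∑ β,
          (pd19 d k (fun y => a y i j α β) x * pfn u i α x * pfn u j β x
            + a x i j α β * pd19 d k (pfn u i α) x * pfn u j β x
            + a x i j α β * (pfn u i α x * pd19 d k (pfn u j β) x)) := by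
    intro i
    rw [pd19_sum _ _ _ _ (fun j _ => (dT2 i j).differentiableAt)]
    refine Finset.sum_congr rfl fun j _ => ?_
    rw [pd19_sum _ _ _ _ (fun α _ => (dT3 i j α).differentiableAt)]
    refine Finset.sum_congr rfl fun α _ => ?_
    rw [pd19_sum _ _ _ _ (fun β _ => (dT i j α β).differentiableAt)]
    refine Finset.sum_congr rfl fun β _ => ?_
    rw [pd19_mul k x (((dA i j α β).fun_mul (dP i α)) x) (dP j β x),
      pd19_mul k x ((dA i j α β) x) (dP i α x)]
    ring
  unfold Sfn
  rw [pd19_sum _ _ _ _ (fun i _ => (dT1 i).differentiableAt)]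
  rw [Finset.sum_congr rfl fun i _ => main i]
  simp only [Finset.sum_add_distrib]
  rw [swap_sum hsymm hu k x]
  ring

lemma G1_eq (ha : ContDiff ℝ 1 a) (hu : ContDiff ℝ 2 u) (hh : ContDiff ℝ 1 h)
    (hsymm : ∀ x i j α β, a x i j α β = a x j i β α) (x : EuclideanSpace ℝ (Fin d)) :
    ∑ k, pd19 d k (fun y => h y k * Sfn a u y) x
      = (∑ k, pd19 d k (fun y => h y k) x) * Sfn a u x
        + (∑ k, h x k * ∑ i, ∑ j, ∑ α, ∑ β,
            pd19 d k (fun y => a y i j α β) x * pfn u i α x * pfn u j β x)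
        + 2 * ∑ k, h x k * ∑ i, ∑ j, ∑ α, ∑ β,
            a x i j α β * pd19 d k (pfn u i α) x * pfn u j β x := by
  have step : ∀ k, pd19 d k (fun y => h y k * Sfn a u y) x
      = pd19 d k (fun y => h y k) x * Sfn a u x + h x k * pd19 d k (Sfn a u) x :=
    fun k => pd19_mul k x ((contDiff_h_comp hh k).differentiable one_ne_zero x)
      ((contDiff_S ha hu).differentiable one_ne_zero x)
  rw [Finset.sum_congr rfl fun k _ => by rw [step k, pd_S ha hu hsymm k x]]
  rw [Finset.sum_add_distrib]
  have e1 : (∑ k, pd19 d k (fun y => h y k) x * Sfn a u x)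
      = (∑ k, pd19 d k (fun y => h y k) x) * Sfn a u x := (Finset.sum_mul _ _ _).symm
  rw [e1]
  have e2 : (∑ k, h x k *
        ((∑ i, ∑ j, ∑ α, ∑ β, pd19 d k (fun y => a y i j α β) x * pfn u i α x * pfn u j β x)
          + 2 * ∑ i, ∑ j, ∑ α, ∑ β, a x i j α β * pd19 d k (pfn u i α) x * pfn u j β x))
      = (∑ k, h x k * ∑ i, ∑ j, ∑ α, ∑ β,
            pd19 d k (fun y => a y i j α β) x * pfn u i α x * pfn u j β x)
        + 2 * ∑ k, h x k * ∑ i, ∑ j, ∑ α, ∑ β,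
            a x i j α β * pd19 d k (pfn u i α) x * pfn u j β x := by
    rw [Finset.mul_sum]
    rw [← Finset.sum_add_distrib]
    refine Finset.sum_congr rfl fun k _ => ?_
    ring
  rw [e2]
  ring


lemma pd_q (hu : ContDiff ℝ 2 u) (hh : ContDiff ℝ 1 h) (i α : Fin d)
    (x : EuclideanSpace ℝ (Fin d)) :
    pd19 d i (qfn u h α) x
      = ∑ k, (pd19 d i (fun y => h y k) x * pfn u k α x
          + h x k * pd19 d i (pfn u k α) x) := by
  unfold qfn
  rw [pd19_sum _ _ _ _ (fun k _ =>
    (((contDiff_h_comp hh k).differentiable one_ne_zero).fun_mul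
      ((contDiff_p hu k α).differentiable one_ne_zero)).differentiableAt)]
  exact Finset.sum_congr rfl fun k _ => pd19_mul i x
    ((contDiff_h_comp hh k).differentiable one_ne_zero x)
    ((contDiff_p hu k α).differentiable one_ne_zero x)

lemma G2_eq (ha : ContDiff ℝ 1 a) (hu : ContDiff ℝ 2 u) (hh : ContDiff ℝ 1 h)
    (x : EuclideanSpace ℝ (Fin d)) :
    ∑ i, pd19 d i (fun y => ∑ α, qfn u h α y * wfn a u i α y) x
      = (∑ i, ∑ α, pd19 d i (qfn u h α) x * wfn a u i α x)
        + ∑ α, qfn u h α x * (∑ i, pd19 d i (wfn a u i α) x) := by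
  have dq : ∀ α, Differentiable ℝ (qfn u h α) :=
    fun α => (contDiff_q hu hh α).differentiable one_ne_zero
  have dw : ∀ i α, Differentiable ℝ (wfn a u i α) :=
    fun i α => (contDiff_w ha hu i α).differentiable one_ne_zero
  have main : ∀ i, pd19 d i (fun y => ∑ α, qfn u h α y * wfn a u i α y) x
      = ∑ α, (pd19 d i (qfn u h α) x * wfn a u i α x
          + qfn u h α x * pd19 d i (wfn a u i α) x) := by
    intro i
    rw [pd19_sum _ _ _ _ (fun α _ => ((dq α).fun_mul (dw i α)).differentiableAt)]
    exact Finset.sum_congr rfl fun α _ => pd19_mul i x (dq α x) (dw i α x)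
  rw [Finset.sum_congr rfl fun i _ => main i]
  simp only [Finset.sum_add_distrib]
  congr 1
  rw [Finset.sum_comm]
  exact Finset.sum_congr rfl fun α _ => (Finset.mul_sum _ _ _).symm

/-- the index reorder `(k,i,j,α,β) ↦ (i,α,k,j,β)`. -/
def sw5 : (Fin d × Fin d × Fin d × Fin d × Fin d) ≃ (Fin d × Fin d × Fin d × Fin d × Fin d) :=
  ⟨fun q => (q.2.1, q.2.2.2.1, q.1, q.2.2.1, q.2.2.2.2),
   fun q => (q.2.2.1, q.1, q.2.2.2.1, q.2.1, q.2.2.2.2),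
   fun q => rfl, fun q => rfl⟩

lemma mix_eq (hu : ContDiff ℝ 2 u) (x : EuclideanSpace ℝ (Fin d)) :
    (∑ i, ∑ α, (∑ k, h x k * pd19 d i (pfn u k α) x) * wfn a u i α x)
      = ∑ k, h x k * ∑ i, ∑ j, ∑ α, ∑ β,
          a x i j α β * pd19 d k (pfn u i α) x * pfn u j β x := by
  have hcomm : ∀ i k α, pd19 d i (pfn u k α) x = pd19 d k (pfn u i α) x :=
    fun i k α => pd19_comm (contDiff_pi.mp hu α) i k x
  -- expand wfn and distribute
  have lhs_eq : (∑ i, ∑ α, (∑ k, h x k * pd19 d i (pfn u k α) x) * wfn a u i α x)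
      = ∑ i, ∑ α, ∑ k, ∑ j, ∑ β,
          (h x k * pd19 d i (pfn u k α) x) * (a x i j α β * pfn u j β x) := by
    refine Finset.sum_congr rfl fun i _ => Finset.sum_congr rfl fun α _ => ?_
    show (∑ k, h x k * pd19 d i (pfn u k α) x) * (∑ j, ∑ β, a x i j α β * pfn u j β x) = _
    rw [Finset.sum_mul]
    refine Finset.sum_congr rfl fun k _ => ?_
    rw [Finset.mul_sum]
    refine Finset.sum_congr rfl fun j _ => ?_
    rw [Finset.mul_sum]
  have rhs_eq : (∑ k, h x k * ∑ i, ∑ j, ∑ α, ∑ β,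
        a x i j α β * pd19 d k (pfn u i α) x * pfn u j β x)
      = ∑ k, ∑ i, ∑ j, ∑ α, ∑ β,
          h x k * (a x i j α β * pd19 d k (pfn u i α) x * pfn u j β x) := by
    refine Finset.sum_congr rfl fun k _ => ?_
    rw [Finset.mul_sum]
    refine Finset.sum_congr rfl fun i _ => ?_
    rw [Finset.mul_sum]
    refine Finset.sum_congr rfl fun j _ => ?_
    rw [Finset.mul_sum]
    refine Finset.sum_congr rfl fun α _ => ?_
    rw [Finset.mul_sum]
  rw [lhs_eq, rhs_eq]
  rw [sum5_collapse (fun i α k j β =>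
    (h x k * pd19 d i (pfn u k α) x) * (a x i j α β * pfn u j β x))]
  rw [sum5_collapse (fun k i j α β =>
    h x k * (a x i j α β * pd19 d k (pfn u i α) x * pfn u j β x))]
  rw [← Equiv.sum_comp sw5 (fun q =>
    (h x q.2.2.1 * pd19 d q.1 (pfn u q.2.2.1 q.2.1) x)
      * (a x q.1 q.2.2.2.1 q.2.1 q.2.2.2.2 * pfn u q.2.2.2.1 q.2.2.2.2 x))]
  refine Finset.sum_congr rfl fun q _ => ?_
  show (h x q.1 * pd19 d q.2.1 (pfn u q.1 q.2.2.2.1) x)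
      * (a x q.2.1 q.2.2.1 q.2.2.2.1 q.2.2.2.2 * pfn u q.2.2.1 q.2.2.2.2 x)
    = h x q.1 * (a x q.2.1 q.2.2.1 q.2.2.2.1 q.2.2.2.2
        * pd19 d q.1 (pfn u q.2.1 q.2.2.2.1) x * pfn u q.2.2.1 q.2.2.2.2 x)
  rw [hcomm q.2.1 q.1 q.2.2.2.1]
  ring


lemma pdh_eq (hh : ContDiff ℝ 1 h) (i k : Fin d) (x : EuclideanSpace ℝ (Fin d)) :
    pd19 d i (fun y => h y k) x = fderiv ℝ h x (EuclideanSpace.single i 1) k := by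
  have hdiff : DifferentiableAt ℝ h x := hh.differentiable one_ne_zero x
  have e : (fun y => h y k) = (EuclideanSpace.proj (𝕜 := ℝ) k) ∘ h := rfl
  unfold pd19
  rw [e, fderiv_comp x (EuclideanSpace.proj k).differentiableAt hdiff]
  rw [ContinuousLinearMap.fderiv]
  simp

lemma pdh_bound (hh : ContDiff ℝ 1 h) (i k : Fin d) (x : EuclideanSpace ℝ (Fin d)) :
    |pd19 d i (fun y => h y k) x| ≤ ‖fderiv ℝ h x‖ := by
  rw [pdh_eq hh i k x]
  calc |fderiv ℝ h x (EuclideanSpace.single i 1) k|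
      ≤ ‖fderiv ℝ h x (EuclideanSpace.single i 1)‖ := euclid_abs_le _ k
  _ ≤ ‖fderiv ℝ h x‖ * ‖(EuclideanSpace.single i 1 : EuclideanSpace ℝ (Fin d))‖ :=
      (fderiv ℝ h x).le_opNorm _
  _ = ‖fderiv ℝ h x‖ := by rw [EuclideanSpace.norm_single, norm_one, mul_one]

lemma pda_eq (ha : ContDiff ℝ 1 a) (k i j α β : Fin d) (x : EuclideanSpace ℝ (Fin d)) :
    pd19 d k (fun y => a y i j α β) x = fderiv ℝ a x (EuclideanSpace.single k 1) i j α β := by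
  have hdiff : DifferentiableAt ℝ a x := ha.differentiable one_ne_zero x
  let L : (Fin d → Fin d → Fin d → Fin d → ℝ) →L[ℝ] ℝ :=
    (ContinuousLinearMap.proj β).comp ((ContinuousLinearMap.proj α).comp
      ((ContinuousLinearMap.proj j).comp (ContinuousLinearMap.proj (R := ℝ)
        (φ := fun _ : Fin d => Fin d → Fin d → Fin d → ℝ) i)))
  have e : (fun y => a y i j α β) = ⇑L ∘ a := rfl
  have e2 : fderiv ℝ (⇑L ∘ a) x = L.comp (fderiv ℝ a x) :=
    (L.hasFDerivAt.comp x hdiff.hasFDerivAt).fderiv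
  unfold pd19
  rw [e, e2]
  rfl

lemma pda_bound (ha : ContDiff ℝ 1 a) (k i j α β : Fin d) (x : EuclideanSpace ℝ (Fin d)) :
    |pd19 d k (fun y => a y i j α β) x| ≤ ‖fderiv ℝ a x‖ := by
  rw [pda_eq ha k i j α β x]
  have h1 : |fderiv ℝ a x (EuclideanSpace.single k 1) i j α β|
      ≤ ‖fderiv ℝ a x (EuclideanSpace.single k 1)‖ := by
    calc |fderiv ℝ a x (EuclideanSpace.single k 1) i j α β|
        = ‖fderiv ℝ a x (EuclideanSpace.single k 1) i j α β‖ := (Real.norm_eq_abs _).symm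
    _ ≤ ‖fderiv ℝ a x (EuclideanSpace.single k 1) i j α‖ := norm_le_pi_norm _ β
    _ ≤ ‖fderiv ℝ a x (EuclideanSpace.single k 1) i j‖ := norm_le_pi_norm _ α
    _ ≤ ‖fderiv ℝ a x (EuclideanSpace.single k 1) i‖ := norm_le_pi_norm _ j
    _ ≤ ‖fderiv ℝ a x (EuclideanSpace.single k 1)‖ := norm_le_pi_norm _ i
  calc |fderiv ℝ a x (EuclideanSpace.single k 1) i j α β|
      ≤ ‖fderiv ℝ a x (EuclideanSpace.single k 1)‖ := h1
  _ ≤ ‖fderiv ℝ a x‖ * ‖(EuclideanSpace.single k 1 : EuclideanSpace ℝ (Fin d))‖ :=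
      (fderiv ℝ a x).le_opNorm _
  _ = ‖fderiv ℝ a x‖ := by rw [EuclideanSpace.norm_single, norm_one, mul_one]

lemma abs_mul_le_of_sq {p q c : ℝ} (hp : p^2 ≤ c) (hq : q^2 ≤ c) : |p * q| ≤ c := by
  rw [abs_mul]
  nlinarith [abs_nonneg p, abs_nonneg q, sq_abs p, sq_abs q, sq_nonneg (|p| - |q|)]

end Main

end Stmt19Aux

set_option maxHeartbeats 2000000 in
open Stmt19Aux in
/-- Rellich-type identity: for `h ∈ C¹`, a solution `u` of `∂_i(a_{ij}^{αβ}∂_j u^β) = 0`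
in a bounded open set with C¹ boundary (encoded via the outward unit normal `n` and
the divergence theorem for the surface measure `μH[d−1]` on `∂Ω`),
`∫_{∂Ω} ⟨h,n⟩ a ∂u ∂u dσ = 2∫_{∂Ω} ⟨h,∇u^α⟩ (∂u/∂ν)^α dσ + I` with
`|I| ≤ C ∫_Ω (|∇h| + |h||∇a|)|∇u|²`, `C = C(d, ‖a‖_∞)`. -/
theorem stmt19 (d : ℕ) (M : ℝ) (hM : 0 < M) :
    ∃ C > 0, ∀ Ω : Set (EuclideanSpace ℝ (Fin d)),
      IsOpen Ω → Bornology.IsBounded Ω →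
      ∀ n : EuclideanSpace ℝ (Fin d) → EuclideanSpace ℝ (Fin d),
      -- n is a unit vector field on ∂Ω
      (∀ x ∈ frontier Ω, ∑ i, (n x i) ^ 2 = 1) →
      -- n is the outward normal: the divergence theorem holds
      (∀ F : EuclideanSpace ℝ (Fin d) → EuclideanSpace ℝ (Fin d), ContDiff ℝ 1 F →
        ∫ x in Ω, ∑ i, pd19 d i (fun y => F y i) x
          = ∫ x in frontier Ω, (∑ i, F x i * n x i) ∂(μH[(d : ℝ) - 1])) →
      ∀ a : EuclideanSpace ℝ (Fin d) → Fin d → Fin d → Fin d → Fin d → ℝ,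
        ContDiff ℝ 1 a →
        (∀ x i j α β, |a x i j α β| ≤ M) →
        (∀ x i j α β, a x i j α β = a x j i β α) →
        ∀ u : EuclideanSpace ℝ (Fin d) → Fin d → ℝ, ContDiff ℝ 2 u →
        (∀ x ∈ Ω, ∀ α,
          ∑ i, pd19 d i
            (fun y => ∑ j, ∑ β, a y i j α β * pd19 d j (fun z => u z β) y) x = 0) →
        ∀ h : EuclideanSpace ℝ (Fin d) → EuclideanSpace ℝ (Fin d), ContDiff ℝ 1 h →
        ∃ I : ℝ,
          (∫ x in frontier Ω,
              ((∑ i, h x i * n x i) *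
                ∑ i, ∑ j, ∑ α, ∑ β,
                  a x i j α β * pd19 d i (fun y => u y α) x
                    * pd19 d j (fun y => u y β) x) ∂(μH[(d : ℝ) - 1]))
            = 2 * (∫ x in frontier Ω,
                (∑ α, (∑ i, h x i * pd19 d i (fun y => u y α) x) *
                  (∑ i, ∑ j, ∑ β,
                    n x i * a x i j α β * pd19 d j (fun y => u y β) x))
                ∂(μH[(d : ℝ) - 1])) + I ∧
          |I| ≤ C * ∫ x in Ω,
              (‖fderiv ℝ h x‖ + ‖h x‖ * ‖fderiv ℝ a x‖)
                * ∑ i, ∑ α, (pd19 d i (fun y => u y α) x) ^ 2 := by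
  refine ⟨3 * (M + 1) * ((d:ℝ)^5 + 1), by positivity, ?_⟩
  intro Ω hΩo hΩb n hn hdiv a ha haM hasym u hu hpde h hh
  have hSc : ContDiff ℝ 1 (Sfn a u) := contDiff_S ha hu
  -- the two vector fields
  set F1 : EuclideanSpace ℝ (Fin d) → EuclideanSpace ℝ (Fin d) :=
    fun x => (EuclideanSpace.equiv (Fin d) ℝ).symm (fun k => h x k * Sfn a u x) with hF1def
  set F2 : EuclideanSpace ℝ (Fin d) → EuclideanSpace ℝ (Fin d) :=
    fun x => (EuclideanSpace.equiv (Fin d) ℝ).symm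
      (fun i => ∑ α, qfn u h α x * wfn a u i α x) with hF2def
  have hF1 : ContDiff ℝ 1 F1 :=
    ((EuclideanSpace.equiv (Fin d) ℝ).symm.contDiff).comp
      (contDiff_pi.mpr fun k => (contDiff_h_comp hh k).mul hSc)
  have hF2 : ContDiff ℝ 1 F2 :=
    ((EuclideanSpace.equiv (Fin d) ℝ).symm.contDiff).comp
      (contDiff_pi.mpr fun i => ContDiff.sum fun α _ =>
        (contDiff_q hu hh α).mul (contDiff_w ha hu i α))
  have e1 : (fun x => ∑ i, pd19 d i (fun y => F1 y i) x)
      = fun x => ∑ k, pd19 d k (fun y => h y k * Sfn a u y) x := rfl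
  have e2 : (fun x => ∑ i, pd19 d i (fun y => F2 y i) x)
      = fun x => ∑ i, pd19 d i (fun y => ∑ α, qfn u h α y * wfn a u i α y) x := rfl
  -- boundary integrand identification
  have hbd1 : (∫ x in frontier Ω,
        ((∑ i, h x i * n x i) *
          ∑ i, ∑ j, ∑ α, ∑ β,
            a x i j α β * pd19 d i (fun y => u y α) x
              * pd19 d j (fun y => u y β) x) ∂(μH[(d : ℝ) - 1]))
      = ∫ x in frontier Ω, (∑ i, F1 x i * n x i) ∂(μH[(d : ℝ) - 1]) := by
    refine integral_congr_ae (Filter.Eventually.of_forall fun x => ?_)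
    show (∑ i, h x i * n x i) * Sfn a u x = ∑ i, F1 x i * n x i
    rw [Finset.sum_mul]
    refine Finset.sum_congr rfl fun i _ => ?_
    show h x i * n x i * Sfn a u x = (h x i * Sfn a u x) * n x i
    ring
  have inner2 : ∀ (x : EuclideanSpace ℝ (Fin d)) (i α : Fin d),
      (∑ j, ∑ β, n x i * a x i j α β * pd19 d j (fun y => u y β) x)
        = wfn a u i α x * n x i := by
    intro x i α
    show _ = (∑ j, ∑ β, a x i j α β * pd19 d j (fun z => u z β) x) * n x i
    rw [Finset.sum_mul]
    refine Finset.sum_congr rfl fun j _ => ?_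
    rw [Finset.sum_mul]
    refine Finset.sum_congr rfl fun β _ => ?_
    ring
  have hbd2 : (∫ x in frontier Ω,
        (∑ α, (∑ i, h x i * pd19 d i (fun y => u y α) x) *
          (∑ i, ∑ j, ∑ β,
            n x i * a x i j α β * pd19 d j (fun y => u y β) x))
        ∂(μH[(d : ℝ) - 1]))
      = ∫ x in frontier Ω, (∑ i, F2 x i * n x i) ∂(μH[(d : ℝ) - 1]) := by
    refine integral_congr_ae (Filter.Eventually.of_forall fun x => ?_)
    show ∑ α, qfn u h α x * (∑ i, ∑ j, ∑ β, n x i * a x i j α β * pd19 d j (fun y => u y β) x)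
        = ∑ i, F2 x i * n x i
    calc ∑ α, qfn u h α x *
          (∑ i, ∑ j, ∑ β, n x i * a x i j α β * pd19 d j (fun y => u y β) x)
        = ∑ α, ∑ i, qfn u h α x * (wfn a u i α x * n x i) := by
          refine Finset.sum_congr rfl fun α _ => ?_
          rw [Finset.mul_sum]
          exact Finset.sum_congr rfl fun i _ => by rw [inner2 x i α]
      _ = ∑ i, ∑ α, qfn u h α x * (wfn a u i α x * n x i) := Finset.sum_comm
      _ = ∑ i, F2 x i * n x i := by
          refine Finset.sum_congr rfl fun i _ => ?_
          show _ = (∑ α, qfn u h α x * wfn a u i α x) * n x i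
          rw [Finset.sum_mul]
          exact Finset.sum_congr rfl fun α _ => by ring
  -- continuity and integrability of the interior integrands
  have hG1c : Continuous (fun x => ∑ k, pd19 d k (fun y => h y k * Sfn a u y) x) :=
    continuous_finset_sum _ fun k _ =>
      (pd19_contDiff (n := 1) (m := 0) ((contDiff_h_comp hh k).mul hSc) (by norm_num) k).continuous
  have hG2c : Continuous
      (fun x => ∑ i, pd19 d i (fun y => ∑ α, qfn u h α y * wfn a u i α y) x) :=
    continuous_finset_sum _ fun i _ =>
      (pd19_contDiff (n := 1) (m := 0)
        (ContDiff.sum fun α _ => (contDiff_q hu hh α).mul (contDiff_w ha hu i α))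
        (by norm_num) i).continuous
  have hG1int : IntegrableOn (fun x => ∑ k, pd19 d k (fun y => h y k * Sfn a u y) x) Ω :=
    integrableOn_of_continuous hΩb hG1c
  have hG2int : IntegrableOn
      (fun x => ∑ i, pd19 d i (fun y => ∑ α, qfn u h α y * wfn a u i α y) x) Ω :=
    integrableOn_of_continuous hΩb hG2c
  -- the error term
  refine ⟨(∫ x in Ω, ∑ i, pd19 d i (fun y => F1 y i) x)
    - 2 * ∫ x in Ω, ∑ i, pd19 d i (fun y => F2 y i) x, ?_, ?_⟩
  · rw [hbd1, ← hdiv F1 hF1, hbd2, ← hdiv F2 hF2]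
    ring
  · -- the bound on the error term
    rw [show (fun x => ∑ i, pd19 d i (fun y => F1 y i) x)
        = fun x => ∑ k, pd19 d k (fun y => h y k * Sfn a u y) x from rfl]
    rw [show (fun x => ∑ i, pd19 d i (fun y => F2 y i) x)
        = fun x => ∑ i, pd19 d i (fun y => ∑ α, qfn u h α y * wfn a u i α y) x from rfl]
    -- the interior identity on Ω
    have key : ∀ x ∈ Ω,
        (∑ k, pd19 d k (fun y => h y k * Sfn a u y) x)
          - 2 * (∑ i, pd19 d i (fun y => ∑ α, qfn u h α y * wfn a u i α y) x)
        = (∑ k, pd19 d k (fun y => h y k) x) * Sfn a u x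
          + (∑ k, h x k * ∑ i, ∑ j, ∑ α, ∑ β,
              pd19 d k (fun y => a y i j α β) x * pfn u i α x * pfn u j β x)
          - 2 * ∑ i, ∑ α,
              (∑ k, pd19 d i (fun y => h y k) x * pfn u k α x) * wfn a u i α x := by
      intro x hx
      rw [G1_eq ha hu hh hasym x, G2_eq ha hu hh x]
      have z : (∑ α, qfn u h α x * (∑ i, pd19 d i (wfn a u i α) x)) = 0 :=
        Finset.sum_eq_zero fun α _ => by
          rw [show (∑ i, pd19 d i (wfn a u i α) x) = 0 from hpde x hx α, mul_zero]
      rw [z, add_zero]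
      have split : (∑ i, ∑ α, pd19 d i (qfn u h α) x * wfn a u i α x)
          = (∑ i, ∑ α, (∑ k, pd19 d i (fun y => h y k) x * pfn u k α x) * wfn a u i α x)
            + ∑ i, ∑ α, (∑ k, h x k * pd19 d i (pfn u k α) x) * wfn a u i α x := by
        rw [Finset.sum_congr rfl fun i _ => Finset.sum_congr rfl fun α _ => by
          rw [pd_q hu hh i α x, Finset.sum_add_distrib, add_mul]]
        simp only [Finset.sum_add_distrib]
      rw [split, mix_eq hu x]
      ring
    have hIeq : (∫ x in Ω, ∑ k, pd19 d k (fun y => h y k * Sfn a u y) x)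
        - 2 * (∫ x in Ω, ∑ i, pd19 d i (fun y => ∑ α, qfn u h α y * wfn a u i α y) x)
        = ∫ x in Ω,
            ((∑ k, pd19 d k (fun y => h y k * Sfn a u y) x)
              - 2 * (∑ i, pd19 d i (fun y => ∑ α, qfn u h α y * wfn a u i α y) x)) := by
      rw [integral_sub hG1int (hG2int.const_mul 2), integral_const_mul]
    rw [hIeq, setIntegral_congr_fun hΩo.measurableSet key]
    have hbound : ∀ x : EuclideanSpace ℝ (Fin d),
        |(∑ k, pd19 d k (fun y => h y k) x) * Sfn a u x
          + (∑ k, h x k * ∑ i, ∑ j, ∑ α, ∑ β,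
              pd19 d k (fun y => a y i j α β) x * pfn u i α x * pfn u j β x)
          - 2 * ∑ i, ∑ α,
              (∑ k, pd19 d i (fun y => h y k) x * pfn u k α x) * wfn a u i α x|
        ≤ 3 * (M + 1) * ((d:ℝ)^5 + 1) * ((‖fderiv ℝ h x‖ + ‖h x‖ * ‖fderiv ℝ a x‖)
              * ∑ i, ∑ α, (pd19 d i (fun y => u y α) x) ^ 2) := by
      intro x
      show _ ≤ 3 * (M + 1) * ((d:ℝ)^5 + 1) *
          ((‖fderiv ℝ h x‖ + ‖h x‖ * ‖fderiv ℝ a x‖) * ∑ i, ∑ α, (pfn u i α x) ^ 2)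
      set Dh := ‖fderiv ℝ h x‖ with hDhdef
      set Da := ‖fderiv ℝ a x‖ with hDadef
      set Hx := ‖h x‖ with hHxdef
      set P := ∑ i, ∑ α, (pfn u i α x) ^ 2 with hPdef
      have hDh0 : (0:ℝ) ≤ Dh := norm_nonneg _
      have hDa0 : (0:ℝ) ≤ Da := norm_nonneg _
      have hHx0 : (0:ℝ) ≤ Hx := norm_nonneg _
      have hP0 : (0:ℝ) ≤ P := Finset.sum_nonneg fun i _ => Finset.sum_nonneg fun α _ => sq_nonneg _
      have hd0 : (0:ℝ) ≤ (d:ℝ) := Nat.cast_nonneg d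
      have hsq : ∀ i α : Fin d, (pfn u i α x)^2 ≤ P := by
        intro i α
        calc (pfn u i α x)^2 ≤ ∑ α', (pfn u i α' x)^2 :=
              Finset.single_le_sum (f := fun α' => (pfn u i α' x)^2)
                (fun _ _ => sq_nonneg _) (Finset.mem_univ α)
        _ ≤ P :=
              Finset.single_le_sum (f := fun i' => ∑ α', (pfn u i' α' x)^2)
                (fun _ _ => Finset.sum_nonneg fun _ _ => sq_nonneg _) (Finset.mem_univ i)
      have hPP : ∀ i α j β : Fin d, |pfn u i α x * pfn u j β x| ≤ P :=
        fun i α j β => abs_mul_le_of_sq (hsq i α) (hsq j β)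
      have hDV : |∑ k, pd19 d k (fun y => h y k) x| ≤ (d:ℝ) * Dh := by
        have h0 := abs_fintype_sum_le (f := fun k : Fin d => pd19 d k (fun y => h y k) x)
          (c := Dh) (fun k => pdh_bound hh k k x)
        simpa using h0
      have hS : |Sfn a u x| ≤ (d:ℝ)^4 * (M * P) := by
        show |∑ i, ∑ j, ∑ α, ∑ β, a x i j α β * pfn u i α x * pfn u j β x| ≤ _
        rw [sum4_collapse (fun i j α β => a x i j α β * pfn u i α x * pfn u j β x)]
        have h0 := abs_fintype_sum_le (c := M * P)
          (f := fun q : Fin d × Fin d × Fin d × Fin d =>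
            a x q.1 q.2.1 q.2.2.1 q.2.2.2 * pfn u q.1 q.2.2.1 x * pfn u q.2.1 q.2.2.2 x)
          (fun q => by
            beta_reduce
            rw [mul_assoc, abs_mul]
            exact mul_le_mul (haM x q.1 q.2.1 q.2.2.1 q.2.2.2) (hPP _ _ _ _) (abs_nonneg _)
              ((abs_nonneg _).trans (haM x q.1 q.2.1 q.2.2.1 q.2.2.2)))
        refine h0.trans_eq ?_
        congr 1
        push_cast [Fintype.card_prod, Fintype.card_fin]
        ring
      have hPA : ∀ k : Fin d, |∑ i, ∑ j, ∑ α, ∑ β,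
          pd19 d k (fun y => a y i j α β) x * pfn u i α x * pfn u j β x|
          ≤ (d:ℝ)^4 * (Da * P) := by
        intro k
        rw [sum4_collapse (fun i j α β =>
          pd19 d k (fun y => a y i j α β) x * pfn u i α x * pfn u j β x)]
        have h0 := abs_fintype_sum_le (c := Da * P)
          (f := fun q : Fin d × Fin d × Fin d × Fin d =>
            pd19 d k (fun y => a y q.1 q.2.1 q.2.2.1 q.2.2.2) x
              * pfn u q.1 q.2.2.1 x * pfn u q.2.1 q.2.2.2 x)
          (fun q => by
            beta_reduce
            rw [mul_assoc, abs_mul]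
            exact mul_le_mul (pda_bound ha k q.1 q.2.1 q.2.2.1 q.2.2.2 x) (hPP _ _ _ _)
              (abs_nonneg _) (norm_nonneg _))
        refine h0.trans_eq ?_
        congr 1
        push_cast [Fintype.card_prod, Fintype.card_fin]
        ring
      have hHPA : |∑ k, h x k * ∑ i, ∑ j, ∑ α, ∑ β,
          pd19 d k (fun y => a y i j α β) x * pfn u i α x * pfn u j β x|
          ≤ (d:ℝ) * (Hx * ((d:ℝ)^4 * (Da * P))) := by
        have h0 := abs_fintype_sum_le (c := Hx * ((d:ℝ)^4 * (Da * P)))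
          (f := fun k : Fin d => h x k * ∑ i, ∑ j, ∑ α, ∑ β,
            pd19 d k (fun y => a y i j α β) x * pfn u i α x * pfn u j β x)
          (fun k => by
            rw [abs_mul]
            exact mul_le_mul (euclid_abs_le (h x) k) (hPA k) (abs_nonneg _) (norm_nonneg _))
        simpa using h0
      have hTH : |∑ i, ∑ α,
          (∑ k, pd19 d i (fun y => h y k) x * pfn u k α x) * wfn a u i α x|
          ≤ (d:ℝ)^5 * (Dh * (M * P)) := by
        have flat : (∑ i, ∑ α,
            (∑ k, pd19 d i (fun y => h y k) x * pfn u k α x) * wfn a u i α x)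
            = ∑ i, ∑ α, ∑ k, ∑ j, ∑ β,
              (pd19 d i (fun y => h y k) x * pfn u k α x)
                * (a x i j α β * pfn u j β x) := by
          refine Finset.sum_congr rfl fun i _ => Finset.sum_congr rfl fun α _ => ?_
          show (∑ k, pd19 d i (fun y => h y k) x * pfn u k α x)
              * (∑ j, ∑ β, a x i j α β * pfn u j β x) = _
          rw [Finset.sum_mul]
          refine Finset.sum_congr rfl fun k _ => ?_
          rw [Finset.mul_sum]
          refine Finset.sum_congr rfl fun j _ => ?_
          rw [Finset.mul_sum]
        rw [flat, sum5_collapse (fun i α k j β =>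
          (pd19 d i (fun y => h y k) x * pfn u k α x) * (a x i j α β * pfn u j β x))]
        have h0 := abs_fintype_sum_le (c := Dh * (M * P))
          (f := fun q : Fin d × Fin d × Fin d × Fin d × Fin d =>
            (pd19 d q.1 (fun y => h y q.2.2.1) x * pfn u q.2.2.1 q.2.1 x)
              * (a x q.1 q.2.2.2.1 q.2.1 q.2.2.2.2 * pfn u q.2.2.2.1 q.2.2.2.2 x))
          (fun q => by
            beta_reduce
            rw [show (pd19 d q.1 (fun y => h y q.2.2.1) x * pfn u q.2.2.1 q.2.1 x)
                * (a x q.1 q.2.2.2.1 q.2.1 q.2.2.2.2 * pfn u q.2.2.2.1 q.2.2.2.2 x)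
              = pd19 d q.1 (fun y => h y q.2.2.1) x * (a x q.1 q.2.2.2.1 q.2.1 q.2.2.2.2
                  * (pfn u q.2.2.1 q.2.1 x * pfn u q.2.2.2.1 q.2.2.2.2 x)) from by ring]
            exact abs_mul3_le (pdh_bound hh q.1 q.2.2.1 x)
              (haM x q.1 q.2.2.2.1 q.2.1 q.2.2.2.2) (hPP _ _ _ _))
        refine h0.trans_eq ?_
        congr 1
        push_cast [Fintype.card_prod, Fintype.card_fin]
        ring
      have tA : |(∑ k, pd19 d k (fun y => h y k) x) * Sfn a u x|
          ≤ ((d:ℝ) * Dh) * ((d:ℝ)^4 * (M * P)) := by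
        rw [abs_mul]
        exact mul_le_mul hDV hS (abs_nonneg _) (by positivity)
      have tri := abs_sub
        ((∑ k, pd19 d k (fun y => h y k) x) * Sfn a u x
          + (∑ k, h x k * ∑ i, ∑ j, ∑ α, ∑ β,
              pd19 d k (fun y => a y i j α β) x * pfn u i α x * pfn u j β x))
        (2 * ∑ i, ∑ α,
          (∑ k, pd19 d i (fun y => h y k) x * pfn u k α x) * wfn a u i α x)
      have tri2 := abs_add_le
        ((∑ k, pd19 d k (fun y => h y k) x) * Sfn a u x)
        (∑ k, h x k * ∑ i, ∑ j, ∑ α, ∑ β,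
          pd19 d k (fun y => a y i j α β) x * pfn u i α x * pfn u j β x)
      have tri3 : |2 * ∑ i, ∑ α,
          (∑ k, pd19 d i (fun y => h y k) x * pfn u k α x) * wfn a u i α x|
          = 2 * |∑ i, ∑ α,
            (∑ k, pd19 d i (fun y => h y k) x * pfn u k α x) * wfn a u i α x| := by
        rw [abs_mul, abs_two]
      have hX : (0:ℝ) ≤ Dh * P := mul_nonneg hDh0 hP0
      have hY : (0:ℝ) ≤ Hx * Da * P := mul_nonneg (mul_nonneg hHx0 hDa0) hP0
      have hK : (0:ℝ) ≤ (d:ℝ)^5 := by positivity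
      have step : |(∑ k, pd19 d k (fun y => h y k) x) * Sfn a u x
          + (∑ k, h x k * ∑ i, ∑ j, ∑ α, ∑ β,
              pd19 d k (fun y => a y i j α β) x * pfn u i α x * pfn u j β x)
          - 2 * ∑ i, ∑ α,
              (∑ k, pd19 d i (fun y => h y k) x * pfn u k α x) * wfn a u i α x|
          ≤ ((d:ℝ) * Dh) * ((d:ℝ)^4 * (M * P))
            + (d:ℝ) * (Hx * ((d:ℝ)^4 * (Da * P)))
            + 2 * ((d:ℝ)^5 * (Dh * (M * P))) := by
        linarith [tri, tri2, tri3, tA, hHPA, hTH]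
      refine step.trans ?_
      have t1 : (0:ℝ) ≤ 3 * (Dh * P) * (M + (d:ℝ)^5 + 1) :=
        mul_nonneg (mul_nonneg (by norm_num) hX) (by linarith)
      have t2 : (0:ℝ) ≤ (Hx * Da * P) * (3 * M * (d:ℝ)^5 + 3 * M + 2 * (d:ℝ)^5 + 3) :=
        mul_nonneg hY (by nlinarith [mul_nonneg hM.le hK])
      have expand : 3 * (M + 1) * ((d:ℝ)^5 + 1) * ((Dh + Hx * Da) * P)
          = (((d:ℝ) * Dh) * ((d:ℝ)^4 * (M * P))
              + (d:ℝ) * (Hx * ((d:ℝ)^4 * (Da * P)))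
              + 2 * ((d:ℝ)^5 * (Dh * (M * P))))
            + (3 * (Dh * P) * (M + (d:ℝ)^5 + 1)
              + (Hx * Da * P) * (3 * M * (d:ℝ)^5 + 3 * M + 2 * (d:ℝ)^5 + 3)) := by
        ring
      linarith [t1, t2]
    have hgc : Continuous (fun x => (‖fderiv ℝ h x‖ + ‖h x‖ * ‖fderiv ℝ a x‖)
              * ∑ i, ∑ α, (pd19 d i (fun y => u y α) x) ^ 2) := by
      apply Continuous.mul
      · exact ((hh.fderiv_right (m := 0) (by norm_num)).continuous.norm).add
          ((hh.continuous.norm).mul ((ha.fderiv_right (m := 0) (by norm_num)).continuous.norm))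
      · exact continuous_finset_sum _ fun i _ => continuous_finset_sum _ fun α _ =>
          ((pd19_contDiff (n := 2) (m := 1) (contDiff_pi.mp hu α) (by norm_num) i).continuous.pow 2)
    have hgint : IntegrableOn (fun x => (‖fderiv ℝ h x‖ + ‖h x‖ * ‖fderiv ℝ a x‖)
              * ∑ i, ∑ α, (pd19 d i (fun y => u y α) x) ^ 2) Ω := integrableOn_of_continuous hΩb hgc
    have hRint : IntegrableOn (fun x => (∑ k, pd19 d k (fun y => h y k) x) * Sfn a u x
          + (∑ k, h x k * ∑ i, ∑ j, ∑ α, ∑ β,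
              pd19 d k (fun y => a y i j α β) x * pfn u i α x * pfn u j β x)
          - 2 * ∑ i, ∑ α,
              (∑ k, pd19 d i (fun y => h y k) x * pfn u k α x) * wfn a u i α x) Ω :=
      (hG1int.sub (hG2int.const_mul 2)).congr
        ((ae_restrict_iff' hΩo.measurableSet).mpr (Filter.Eventually.of_forall key))
    have habs : |∫ x in Ω, ((∑ k, pd19 d k (fun y => h y k) x) * Sfn a u x
          + (∑ k, h x k * ∑ i, ∑ j, ∑ α, ∑ β,
              pd19 d k (fun y => a y i j α β) x * pfn u i α x * pfn u j β x)
          - 2 * ∑ i, ∑ α,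
              (∑ k, pd19 d i (fun y => h y k) x * pfn u k α x) * wfn a u i α x)|
        ≤ ∫ x in Ω, |(∑ k, pd19 d k (fun y => h y k) x) * Sfn a u x
          + (∑ k, h x k * ∑ i, ∑ j, ∑ α, ∑ β,
              pd19 d k (fun y => a y i j α β) x * pfn u i α x * pfn u j β x)
          - 2 * ∑ i, ∑ α,
              (∑ k, pd19 d i (fun y => h y k) x * pfn u k α x) * wfn a u i α x| := by
      simpa [Real.norm_eq_abs] using
        norm_integral_le_integral_norm (μ := volume.restrict Ω) (fun x => (∑ k, pd19 d k (fun y => h y k) x) * Sfn a u x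
          + (∑ k, h x k * ∑ i, ∑ j, ∑ α, ∑ β,
              pd19 d k (fun y => a y i j α β) x * pfn u i α x * pfn u j β x)
          - 2 * ∑ i, ∑ α,
              (∑ k, pd19 d i (fun y => h y k) x * pfn u k α x) * wfn a u i α x)
    have hmono : (∫ x in Ω, |(∑ k, pd19 d k (fun y => h y k) x) * Sfn a u x
          + (∑ k, h x k * ∑ i, ∑ j, ∑ α, ∑ β,
              pd19 d k (fun y => a y i j α β) x * pfn u i α x * pfn u j β x)
          - 2 * ∑ i, ∑ α,
              (∑ k, pd19 d i (fun y => h y k) x * pfn u k α x) * wfn a u i α x|)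
        ≤ ∫ x in Ω, 3 * (M + 1) * ((d:ℝ)^5 + 1) * ((‖fderiv ℝ h x‖ + ‖h x‖ * ‖fderiv ℝ a x‖)
              * ∑ i, ∑ α, (pd19 d i (fun y => u y α) x) ^ 2) :=
      setIntegral_mono_on hRint.abs (hgint.const_mul _) hΩo.measurableSet
        (fun x _ => hbound x)
    refine (habs.trans hmono).trans_eq ?_
    exact integral_const_mul _ _
end
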